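/- arXiv:2112.15436 — 4 statements merged into one kernel-verified Lean document; each statement's English description precedes it below -/
import Mathlib

section
/- Let k be a field, n ≥ 1, and let Δ, Δ' ∈ Mat_n(k) be matrices of the same rank. Then there exists a k-linear bijection ψ : Mat_n(k) → Mat_n(k) with ψ(XΔY) = ψ(X)Δ'ψ(Y) for all X, Y ∈ Mat_n(k); that is, the Δ-homotope of the matrix algebra Mat_n(k) is determined up to isomorphism by the rank of Δ. -/
/-!
Matrices of equal rank are equivalent: `Δ' = U Δ V` with `U, V` invertible (split off the kernel
and a complement of the image of each matrix and match the pieces by dimension). Then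
`ψ X = V⁻¹ X U⁻¹` satisfies `ψ X Δ' ψ Y = V⁻¹ X Δ Y U⁻¹ = ψ (X Δ Y)`.
-/

open LinearMap Module Submodule

section LinearAlgebra

variable {K V W : Type*} [DivisionRing K] [AddCommGroup V] [Module K V]
  [AddCommGroup W] [Module K W]

theorem LinearMap.exists_linearEquiv_prod_ker_range (f : V →ₗ[K] W) :
    ∃ e : V ≃ₗ[K] ker f × range f, ∀ x, ((e x).2 : W) = f x := by
  obtain ⟨C, hC⟩ := (ker f).exists_isCompl
  refine ⟨equivProdOfSurjectiveOfIsCompl _ f.rangeRestrict (range_projectionOnto hC)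
    f.range_rangeRestrict ?_, fun _ => rfl⟩
  rw [ker_projectionOnto, ker_rangeRestrict]
  exact hC.symm

theorem Submodule.exists_linearEquiv_extend [FiniteDimensional K W] {p q : Submodule K W}
    (φ : p ≃ₗ[K] q) : ∃ u : W ≃ₗ[K] W, ∀ x : p, u x = φ x := by
  obtain ⟨P, hP⟩ := p.exists_isCompl
  obtain ⟨Q, hQ⟩ := q.exists_isCompl
  have hPQ : finrank K P = finrank K Q := by
    have := finrank_add_eq_of_isCompl hP
    have := finrank_add_eq_of_isCompl hQ
    have := φ.finrank_eq
    omega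
  refine ⟨(prodEquivOfIsCompl p P hP).symm ≪≫ₗ φ.prodCongr (.ofFinrankEq P Q hPQ) ≪≫ₗ
    prodEquivOfIsCompl q Q hQ, fun x => ?_⟩
  simp

theorem LinearMap.exists_linearEquiv_comp_comp_eq [FiniteDimensional K V] [FiniteDimensional K W]
    (f g : V →ₗ[K] W) (h : finrank K (range f) = finrank K (range g)) :
    ∃ (u : W ≃ₗ[K] W) (v : V ≃ₗ[K] V), ∀ x, u (f (v x)) = g x := by
  obtain ⟨eF, heF⟩ := f.exists_linearEquiv_prod_ker_range
  obtain ⟨eG, heG⟩ := g.exists_linearEquiv_prod_ker_range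
  have hker : finrank K (ker g) = finrank K (ker f) := by
    have := f.finrank_range_add_finrank_ker
    have := g.finrank_range_add_finrank_ker
    omega
  let φ : range g ≃ₗ[K] range f := .ofFinrankEq _ _ h.symm
  obtain ⟨u, hu⟩ := exists_linearEquiv_extend φ.symm
  refine ⟨u, eG ≪≫ₗ (LinearEquiv.ofFinrankEq _ _ hker).prodCongr φ ≪≫ₗ eF.symm, fun x => ?_⟩
  have hf : ∀ p, f (eF.symm p) = p.2 := fun p => by simpa using (heF (eF.symm p)).symm
  simp [hf, hu, ← heG x]

end LinearAlgebra

theorem Matrix.exists_unit_mulVecLin_eq {n R : Type*} [Fintype n] [DecidableEq n] [CommRing R]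
    (w : (n → R) ≃ₗ[R] n → R) : ∃ U : (Matrix n n R)ˣ, (U : Matrix n n R).mulVecLin = w := by
  let U := GeneralLinearGroup.toLin.symm
    ((LinearMap.GeneralLinearGroup.generalLinearEquiv R (n → R)).symm w)
  refine ⟨U, ?_⟩
  have := GeneralLinearGroup.coe_toLin U
  rw [MulEquiv.apply_symm_apply] at this
  exact this.symm

theorem Matrix.exists_units_mul_mul_eq_of_rank_eq {n K : Type*} [Fintype n] [DecidableEq n]
    [Field K] {A B : Matrix n n K} (h : A.rank = B.rank) :
    ∃ U V : (Matrix n n K)ˣ, (U : Matrix n n K) * A * V = B := by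
  obtain ⟨u, v, huv⟩ := A.mulVecLin.exists_linearEquiv_comp_comp_eq B.mulVecLin h
  obtain ⟨U, hU⟩ := exists_unit_mulVecLin_eq u
  obtain ⟨V, hV⟩ := exists_unit_mulVecLin_eq v
  refine ⟨U, V, toLin'.injective (LinearMap.ext fun x => ?_)⟩
  simp only [toLin'_apply', mulVecLin_mul, hU, hV, LinearMap.comp_apply]
  exact huv x

theorem Units.exists_linearEquiv_homotope {R A : Type*} [CommSemiring R] [Semiring A]
    [Algebra R A] (u v : Aˣ) (Δ : A) :
    ∃ ψ : A ≃ₗ[R] A, ∀ x y, ψ (x * Δ * y) = ψ x * (u * Δ * v) * ψ y := by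
  refine ⟨v⁻¹.mulLeftLinearEquiv R A ≪≫ₗ u⁻¹.mulRightLinearEquiv R, fun x y => ?_⟩
  simp only [LinearEquiv.trans_apply, mulLeftLinearEquiv_apply, mulRightLinearEquiv_apply]
  simp [mul_assoc]

theorem matrix_homotope_iso_of_rank_eq_general
    {k : Type*} [Field k] {n : ℕ}
    (Δ Δ' : Matrix (Fin n) (Fin n) k) (hrank : Δ.rank = Δ'.rank) :
    ∃ ψ : Matrix (Fin n) (Fin n) k ≃ₗ[k] Matrix (Fin n) (Fin n) k,
      ∀ X Y : Matrix (Fin n) (Fin n) k,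
        ψ (X * Δ * Y) = ψ X * Δ' * ψ Y := by
  obtain ⟨U, V, rfl⟩ := Matrix.exists_units_mul_mul_eq_of_rank_eq hrank
  exact U.exists_linearEquiv_homotope V Δ

/-- The Δ-homotope of the matrix algebra `Mat_n(k)` is determined up to
isomorphism by the rank of `Δ`: if `Δ, Δ'` have the same rank, then there is a
k-linear bijection `ψ` with `ψ(XΔY) = ψ(X) Δ' ψ(Y)`. -/
theorem matrix_homotope_iso_of_rank_eq
    {k : Type*} [Field k] {n : ℕ} (hn : 1 ≤ n)
    (Δ Δ' : Matrix (Fin n) (Fin n) k) (hrank : Δ.rank = Δ'.rank) :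
    ∃ ψ : Matrix (Fin n) (Fin n) k ≃ₗ[k] Matrix (Fin n) (Fin n) k,
      ∀ X Y : Matrix (Fin n) (Fin n) k,
        ψ (X * Δ * Y) = ψ X * Δ' * ψ Y :=
  matrix_homotope_iso_of_rank_eq_general Δ Δ' hrank
end

section
/- For λ ≠ μ in k, the 2-dimensional non-associative algebras B_λ and B_μ are not isomorphic: there is no k-linear bijection ψ : k² → k² satisfying ψ(x ×_λ y) = ψ(x) ×_μ ψ(y) for all x, y ∈ k². -/
/-- The multiplication of the 2-dimensional algebra `A` on `k²` with basis
`e₁ = (1,0)`, `e₂ = (0,1)` and `e₁e₁ = e₁, e₂e₁ = e₂, e₁e₂ = e₁, e₂e₂ = e₁`,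
extended bilinearly. -/
def mulA {k : Type*} [Field k] (a b : Fin 2 → k) : Fin 2 → k :=
  ![a 0 * b 0 + a 0 * b 1 + a 1 * b 1, a 1 * b 0]

/-- The multiplication of the left `Δ(λ)`-homotope `B_λ`, where
`Δ(λ) = e₁ + λ e₂`: `x ×_λ y = (x · Δ(λ)) · y`. -/
def mulB {k : Type*} [Field k] (l : k) (x y : Fin 2 → k) : Fin 2 → k :=
  mulA (mulA x ![1, l]) y

/-- The 2-dimensional non-associative algebras `B_λ` are pairwise
non-isomorphic: for `λ ≠ μ` there is no k-linear bijection `ψ` with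
`ψ(x ×_λ y) = ψ(x) ×_μ ψ(y)`. -/
theorem Bl_pairwise_nonisomorphic
    {k : Type*} [Field k] [IsAlgClosed k] [CharZero k]
    (l μ : k) (hlμ : l ≠ μ) :
    ¬ ∃ ψ : (Fin 2 → k) ≃ₗ[k] (Fin 2 → k),
        ∀ x y : Fin 2 → k, ψ (mulB l x y) = mulB μ (ψ x) (ψ y) := by
  rintro ⟨ψ, h⟩
  set e1 : Fin 2 → k := ![1,0] with he1
  set e2 : Fin 2 → k := ![0,1] with he2
  have key : ∀ (s t : k) (i : Fin 2), ψ ![s, t] i = s * ψ e1 i + t * ψ e2 i := by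
    intro s t i
    have hv : (![s,t] : Fin 2 → k) = s • e1 + t • e2 := by
      funext j; fin_cases j <;> simp [he1, he2]
    rw [hv, map_add, map_smul, map_smul]; simp
  set a := ψ e1 0 with ha
  set c := ψ e1 1 with hc
  set b := ψ e2 0 with hb
  set d := ψ e2 1 with hd
  -- products in B_l
  have m11 : mulB l e1 e1 = ![1+l, 0] := by
    funext i; fin_cases i <;> (simp [mulB, mulA, he1]; try ring)
  have m12 : mulB l e1 e2 = ![1+l, 0] := by
    funext i; fin_cases i <;> (simp [mulB, mulA, he1, he2]; try ring)
  have m21 : mulB l e2 e1 = ![l, 1] := by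
    funext i; fin_cases i <;> (simp [mulB, mulA, he1, he2]; try ring)
  have m22 : mulB l e2 e2 = ![1+l, 0] := by
    funext i; fin_cases i <;> (simp [mulB, mulA, he1, he2]; try ring)
  have h11 := h e1 e1; rw [m11] at h11
  have h12 := h e1 e2; rw [m12] at h12
  have h21 := h e2 e1; rw [m21] at h21
  have h22 := h e2 e2; rw [m22] at h22
  have h1a := congrFun h11 0
  have h1b := congrFun h11 1
  have h2b := congrFun h12 1
  have h3b := congrFun h21 1
  have h4b := congrFun h22 1
  rw [key] at h1a h1b h2b h3b h4b
  simp only [mulB, mulA] at h1a h1b h2b h3b h4b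
  simp [← ha, ← hb, ← hc, ← hd] at h1a h1b h2b h3b h4b
  -- invertibility: det ≠ 0
  obtain ⟨p, hp⟩ := ψ.surjective e1
  obtain ⟨q, hq⟩ := ψ.surjective e2
  have hpfun : (![p 0, p 1] : Fin 2 → k) = p := by
    funext j; fin_cases j <;> rfl
  have hqfun : (![q 0, q 1] : Fin 2 → k) = q := by
    funext j; fin_cases j <;> rfl
  have hp0 : p 0 * a + p 1 * b = 1 := by
    have := key (p 0) (p 1) 0; rw [hpfun, hp] at this
    simpa [he1, ← ha, ← hb] using this.symm
  have hp1 : p 0 * c + p 1 * d = 0 := by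
    have := key (p 0) (p 1) 1; rw [hpfun, hp] at this
    simpa [he1, ← hc, ← hd] using this.symm
  have hq0 : q 0 * a + q 1 * b = 0 := by
    have := key (q 0) (q 1) 0; rw [hqfun, hq] at this
    simpa [he2, ← ha, ← hb] using this.symm
  have hq1 : q 0 * c + q 1 * d = 1 := by
    have := key (q 0) (q 1) 1; rw [hqfun, hq] at this
    simpa [he2, ← hc, ← hd] using this.symm
  have hDet : a * d - b * c ≠ 0 := by
    intro hz
    have : (p 0 * q 1 - p 1 * q 0) * (a * d - b * c) = 1 := by
      linear_combination (q 0 * c + q 1 * d) * hp0 - (q 0 * a + q 1 * b) * hp1 + hq1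
    rw [hz, mul_zero] at this
    exact one_ne_zero this.symm
  by_cases hc0 : c = 0
  · have had : a * d ≠ 0 := by simpa [hc0] using hDet
    have hdne : d ≠ 0 := fun hd0 => had (by rw [hd0, mul_zero])
    have ha1 : a = 1 := by
      have hz : d * (a - 1) = 0 := by rw [hc0] at h3b; linear_combination -h3b
      rcases mul_eq_zero.mp hz with h' | h'
      · exact absurd h' hdne
      · exact sub_eq_zero.mp h'
    apply hlμ
    rw [ha1, hc0] at h1a
    linear_combination h1a
  · have hA : a = 1 + l := by
      rcases mul_eq_mul_left_iff.mp (by linear_combination -h1b : c * a = c * (1 + l)) with h' | h'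
      · exact h'
      · exact absurd h' hc0
    have hB : b = 1 + l := by
      rcases mul_eq_mul_left_iff.mp (by linear_combination -h2b : c * b = c * (1 + l)) with h' | h'
      · exact h'
      · exact absurd h' hc0
    by_cases hl : 1 + l = 0
    · apply hDet
      rw [hA, hB, hl]; ring
    · have hdc : d = c := by
        rcases mul_eq_mul_left_iff.mp
          (by linear_combination -h4b - d * hB : (1 + l) * d = (1 + l) * c) with h' | h'
        · exact h'
        · exact absurd h' hl
      apply hDet
      rw [hA, hB, hdc]; ring
end

section
/- For λ, λ' ∈ k, the homotopes B_{Δ(λ)} and B_{Δ(λ')} are isomorphic (i.e. there exists a k-linear bijection ψ : B → B with ψ(aΔ(λ)b) = ψ(a)Δ(λ')ψ(b) for all a, b ∈ B) if and only if λ' = λ or λλ' = 1. In particular, B is a 16-dimensional unital associative k-algebra with infinitely many pairwise non-isomorphic Δ-homotopes. -/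
open FreeAlgebra in
/-- The relations defining the algebra `B = k⟨x, y, h₁, h₂⟩ / I`, where `I` is
generated by `x², y²`, all products `hᵢhⱼ`, the element `xh₁y − yh₂x`, and all
words of length 3 in the generators except `xh₁y` and `yh₂x`.
Here `x = ι 0`, `y = ι 1`, `h₁ = ι 2`, `h₂ = ι 3`. -/
def Brel (k : Type*) [Field k] :
    FreeAlgebra k (Fin 4) → FreeAlgebra k (Fin 4) → Prop :=
  fun a b => b = 0 ∧
    (a = ι k 0 * ι k 0 ∨ a = ι k 1 * ι k 1 ∨
     a = ι k 2 * ι k 2 ∨ a = ι k 2 * ι k 3 ∨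
     a = ι k 3 * ι k 2 ∨ a = ι k 3 * ι k 3 ∨
     a = ι k 0 * ι k 2 * ι k 1 - ι k 1 * ι k 3 * ι k 0 ∨
     (∃ w : Fin 3 → Fin 4, w ≠ ![0, 2, 1] ∧ w ≠ ![1, 3, 0] ∧
        a = ι k (w 0) * ι k (w 1) * ι k (w 2)))

/-- The element `Δ(λ) = λh₁ + h₂` of `B`. -/
noncomputable def BDelta (k : Type*) [Field k] (l : k) : RingQuot (Brel k) :=
  RingQuot.mkAlgHom k (Brel k) (l • FreeAlgebra.ι k 2 + FreeAlgebra.ι k 3)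

namespace BHmt

variable {k : Type*} [Field k]

/-! ### The 16-dimensional model algebra `E`.
Basis indices: 0:1, 1:x, 2:y, 3:h1, 4:h2, 5:xy, 6:yx, 7:xh1, 8:xh2, 9:yh1,
10:yh2, 11:h1x, 12:h2x, 13:h1y, 14:h2y, 15:t = xh1y = yh2x. -/

variable (k) in
def E := Fin 16 → k

instance : AddCommGroup (E k) := Pi.addCommGroup
instance : Module k (E k) := Pi.module _ _ _

def emul (a b : E k) : E k := fun i =>
  match i with
  | ⟨0,_⟩ => a 0 * b 0
  | ⟨1,_⟩ => a 0 * b 1 + a 1 * b 0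
  | ⟨2,_⟩ => a 0 * b 2 + a 2 * b 0
  | ⟨3,_⟩ => a 0 * b 3 + a 3 * b 0
  | ⟨4,_⟩ => a 0 * b 4 + a 4 * b 0
  | ⟨5,_⟩ => a 0 * b 5 + a 5 * b 0 + a 1 * b 2
  | ⟨6,_⟩ => a 0 * b 6 + a 6 * b 0 + a 2 * b 1
  | ⟨7,_⟩ => a 0 * b 7 + a 7 * b 0 + a 1 * b 3
  | ⟨8,_⟩ => a 0 * b 8 + a 8 * b 0 + a 1 * b 4
  | ⟨9,_⟩ => a 0 * b 9 + a 9 * b 0 + a 2 * b 3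
  | ⟨10,_⟩ => a 0 * b 10 + a 10 * b 0 + a 2 * b 4
  | ⟨11,_⟩ => a 0 * b 11 + a 11 * b 0 + a 3 * b 1
  | ⟨12,_⟩ => a 0 * b 12 + a 12 * b 0 + a 4 * b 1
  | ⟨13,_⟩ => a 0 * b 13 + a 13 * b 0 + a 3 * b 2
  | ⟨14,_⟩ => a 0 * b 14 + a 14 * b 0 + a 4 * b 2
  | ⟨15,_⟩ => a 0 * b 15 + a 15 * b 0 + a 1 * b 13 + a 2 * b 12 + a 7 * b 2 + a 10 * b 1
  | ⟨_+16,h⟩ => absurd h (by omega)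

/-- basis vectors -/
def eb (i : Fin 16) : E k := fun j => if j = i then 1 else 0

def eone : E k := fun i =>
  match i with
  | ⟨0,_⟩ => 1
  | _ => 0

lemma add_apply (a b : E k) (i : Fin 16) : (a + b) i = a i + b i := rfl
lemma smul_apply (c : k) (a : E k) (i : Fin 16) : (c • a) i = c * a i := rfl
lemma zero_apply (i : Fin 16) : (0 : E k) i = 0 := rfl

instance : Ring (E k) where
  __ := (inferInstance : AddCommGroup (E k))
  mul := emul
  left_distrib a b c := by
    show emul a (b + c) = emul a b + emul a c
    funext i; fin_cases i <;> (show _ = _) <;>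
      simp only [emul, add_apply] <;> ring
  right_distrib a b c := by
    show emul (a + b) c = emul a c + emul b c
    funext i; fin_cases i <;> (show _ = _) <;>
      simp only [emul, add_apply] <;> ring
  zero_mul a := by
    show emul 0 a = 0
    funext i; fin_cases i <;> (show _ = _) <;>
      simp only [emul, zero_apply] <;> ring
  mul_zero a := by
    show emul a 0 = 0
    funext i; fin_cases i <;> (show _ = _) <;>
      simp only [emul, zero_apply] <;> ring
  mul_assoc a b c := by
    show emul (emul a b) c = emul a (emul b c)
    funext i; fin_cases i <;> (show _ = _) <;> simp only [emul] <;> ring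
  one := eone
  one_mul a := by
    show emul eone a = a
    funext i; fin_cases i <;> (show _ = _) <;> simp [emul, eone] <;> (show (1:k) * _ = _) <;> rw [one_mul]
  mul_one a := by
    show emul a eone = a
    funext i; fin_cases i <;> (show _ = _) <;> simp [emul, eone] <;> (show _ * (1:k) = _) <;> rw [mul_one]

lemma mul_def (a b : E k) : a * b = emul a b := rfl

instance : Algebra k (E k) :=
  Algebra.ofModule
    (fun r a b => by
      show emul (r • a) b = r • emul a b
      funext i; fin_cases i <;> (show _ = _) <;>
        simp only [emul, smul_apply] <;> ring)
    (fun r a b => by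
      show emul a (r • b) = r • emul a b
      funext i; fin_cases i <;> (show _ = _) <;>
        simp only [emul, smul_apply] <;> ring)

lemma eone_eq : (eone : E k) = eb 0 := by
  funext i; fin_cases i <;> (show _ = _) <;>
    simp (config := { decide := true }) [eone, eb] <;> rfl

lemma one_eq : (1 : E k) = eb 0 := eone_eq

/-- the generators of `E` corresponding to x, y, h1, h2 -/
def gb (j : Fin 4) : E k := fun i =>
  match j with
  | ⟨0,_⟩ => eb 1 i
  | ⟨1,_⟩ => eb 2 i
  | ⟨2,_⟩ => eb 3 i
  | ⟨3,_⟩ => eb 4 i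
  | ⟨_+4,h⟩ => absurd h (by omega)

lemma e1_2 : (eb 1 : E k) * eb 2 = eb 5 := by
  funext m; fin_cases m <;> (show emul _ _ _ = _) <;>
    simp (config := { decide := true }) [emul, eb]

lemma e2_1 : (eb 2 : E k) * eb 1 = eb 6 := by
  funext m; fin_cases m <;> (show emul _ _ _ = _) <;>
    simp (config := { decide := true }) [emul, eb]

lemma e1_3 : (eb 1 : E k) * eb 3 = eb 7 := by
  funext m; fin_cases m <;> (show emul _ _ _ = _) <;>
    simp (config := { decide := true }) [emul, eb]

lemma e1_4 : (eb 1 : E k) * eb 4 = eb 8 := by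
  funext m; fin_cases m <;> (show emul _ _ _ = _) <;>
    simp (config := { decide := true }) [emul, eb]

lemma e2_3 : (eb 2 : E k) * eb 3 = eb 9 := by
  funext m; fin_cases m <;> (show emul _ _ _ = _) <;>
    simp (config := { decide := true }) [emul, eb]

lemma e2_4 : (eb 2 : E k) * eb 4 = eb 10 := by
  funext m; fin_cases m <;> (show emul _ _ _ = _) <;>
    simp (config := { decide := true }) [emul, eb]

lemma e3_1 : (eb 3 : E k) * eb 1 = eb 11 := by
  funext m; fin_cases m <;> (show emul _ _ _ = _) <;>
    simp (config := { decide := true }) [emul, eb]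

lemma e4_1 : (eb 4 : E k) * eb 1 = eb 12 := by
  funext m; fin_cases m <;> (show emul _ _ _ = _) <;>
    simp (config := { decide := true }) [emul, eb]

lemma e3_2 : (eb 3 : E k) * eb 2 = eb 13 := by
  funext m; fin_cases m <;> (show emul _ _ _ = _) <;>
    simp (config := { decide := true }) [emul, eb]

lemma e4_2 : (eb 4 : E k) * eb 2 = eb 14 := by
  funext m; fin_cases m <;> (show emul _ _ _ = _) <;>
    simp (config := { decide := true }) [emul, eb]

lemma e7_2 : (eb 7 : E k) * eb 2 = eb 15 := by
  funext m; fin_cases m <;> (show emul _ _ _ = _) <;>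
    simp (config := { decide := true }) [emul, eb]

lemma e10_1 : (eb 10 : E k) * eb 1 = eb 15 := by
  funext m; fin_cases m <;> (show emul _ _ _ = _) <;>
    simp (config := { decide := true }) [emul, eb]

lemma e1_1 : (eb 1 : E k) * eb 1 = 0 := by
  funext m; fin_cases m <;> (show emul _ _ _ = _) <;>
    simp (config := { decide := true }) [emul, eb, zero_apply]

lemma e2_2 : (eb 2 : E k) * eb 2 = 0 := by
  funext m; fin_cases m <;> (show emul _ _ _ = _) <;>
    simp (config := { decide := true }) [emul, eb, zero_apply]

lemma e3_3 : (eb 3 : E k) * eb 3 = 0 := by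
  funext m; fin_cases m <;> (show emul _ _ _ = _) <;>
    simp (config := { decide := true }) [emul, eb, zero_apply]

lemma e3_4 : (eb 3 : E k) * eb 4 = 0 := by
  funext m; fin_cases m <;> (show emul _ _ _ = _) <;>
    simp (config := { decide := true }) [emul, eb, zero_apply]

lemma e4_3 : (eb 4 : E k) * eb 3 = 0 := by
  funext m; fin_cases m <;> (show emul _ _ _ = _) <;>
    simp (config := { decide := true }) [emul, eb, zero_apply]

lemma e4_4 : (eb 4 : E k) * eb 4 = 0 := by
  funext m; fin_cases m <;> (show emul _ _ _ = _) <;>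
    simp (config := { decide := true }) [emul, eb, zero_apply]

/-- triple products of "positive degree" elements -/
lemma triple0 (a b c : E k) (ha : a 0 = 0) (hb : b 0 = 0) (hc : c 0 = 0) :
    a * b * c = (a 1 * b 3 * c 2 + a 2 * b 4 * c 1) • eb 15 := by
  funext i; fin_cases i <;> (show emul (emul a b) c _ = _) <;>
    simp (config := { decide := true }) [emul, eb, smul_apply, ha, hb, hc] <;> ring

lemma gb_zero (j : Fin 4) : (gb j : E k) 0 = 0 := by
  fin_cases j <;> simp (config := { decide := true }) [gb, eb]

lemma gb_one (j : Fin 4) : (gb j : E k) 1 = if j = 0 then 1 else 0 := by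
  fin_cases j <;> simp (config := { decide := true }) [gb, eb]

lemma gb_two (j : Fin 4) : (gb j : E k) 2 = if j = 1 then 1 else 0 := by
  fin_cases j <;> simp (config := { decide := true }) [gb, eb]

lemma gb_three (j : Fin 4) : (gb j : E k) 3 = if j = 2 then 1 else 0 := by
  fin_cases j <;> simp (config := { decide := true }) [gb, eb]

lemma gb_four (j : Fin 4) : (gb j : E k) 4 = if j = 3 then 1 else 0 := by
  fin_cases j <;> simp (config := { decide := true }) [gb, eb]

lemma gb_word (a b c : Fin 4) :
    (gb a : E k) * gb b * gb c =
      ((if a = 0 then (1:k) else 0) * (if b = 2 then 1 else 0) * (if c = 1 then 1 else 0)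
        + (if a = 1 then (1:k) else 0) * (if b = 3 then 1 else 0) * (if c = 0 then 1 else 0))
        • eb 15 := by
  rw [triple0 _ _ _ (gb_zero a) (gb_zero b) (gb_zero c),
    gb_one, gb_two, gb_three, gb_four, gb_one, gb_two]

lemma gb_word_zero (a b c : Fin 4) (h1 : ¬(a = 0 ∧ b = 2 ∧ c = 1))
    (h2 : ¬(a = 1 ∧ b = 3 ∧ c = 0)) : (gb a : E k) * gb b * gb c = 0 := by
  rw [gb_word]
  have : ((if a = 0 then (1:k) else 0) * (if b = 2 then 1 else 0) * (if c = 1 then 1 else 0)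
        + (if a = 1 then (1:k) else 0) * (if b = 3 then 1 else 0) * (if c = 0 then 1 else 0)) = 0 := by
    split_ifs <;> simp_all
  rw [this, zero_smul]

/-! ### The algebra `B` and the map to `E`. -/

variable (k) in
noncomputable abbrev B := RingQuot (Brel k)

noncomputable def G (j : Fin 4) : B k := RingQuot.mkAlgHom k (Brel k) (FreeAlgebra.ι k j)

lemma rel0 {u : FreeAlgebra k (Fin 4)} (h : Brel k u 0) :
    RingQuot.mkAlgHom k (Brel k) u = 0 := by
  simpa using RingQuot.mkAlgHom_rel k h

lemma relxx : (G 0 : B k) * G 0 = 0 := by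
  have := rel0 (k := k) ⟨rfl, Or.inl rfl⟩
  simpa [map_mul, G] using this

lemma relyy : (G 1 : B k) * G 1 = 0 := by
  have := rel0 (k := k) ⟨rfl, Or.inr (Or.inl rfl)⟩
  simpa [map_mul, G] using this

lemma rel22 : (G 2 : B k) * G 2 = 0 := by
  have := rel0 (k := k) ⟨rfl, Or.inr (Or.inr (Or.inl rfl))⟩
  simpa [map_mul, G] using this

lemma rel23 : (G 2 : B k) * G 3 = 0 := by
  have := rel0 (k := k) ⟨rfl, Or.inr (Or.inr (Or.inr (Or.inl rfl)))⟩
  simpa [map_mul, G] using this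

lemma rel32 : (G 3 : B k) * G 2 = 0 := by
  have := rel0 (k := k) ⟨rfl, Or.inr (Or.inr (Or.inr (Or.inr (Or.inl rfl))))⟩
  simpa [map_mul, G] using this

lemma rel33 : (G 3 : B k) * G 3 = 0 := by
  have := rel0 (k := k) ⟨rfl, Or.inr (Or.inr (Or.inr (Or.inr (Or.inr (Or.inl rfl)))))⟩
  simpa [map_mul, G] using this

lemma reldiff : (G 0 : B k) * G 2 * G 1 = G 1 * G 3 * G 0 := by
  have := rel0 (k := k)
    ⟨rfl, Or.inr (Or.inr (Or.inr (Or.inr (Or.inr (Or.inr (Or.inl rfl))))))⟩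
  rw [map_sub, map_mul, map_mul, map_mul, map_mul, sub_eq_zero] at this
  exact this

lemma word3B (a b c : Fin 4) (h1 : ¬(a = 0 ∧ b = 2 ∧ c = 1))
    (h2 : ¬(a = 1 ∧ b = 3 ∧ c = 0)) : (G a : B k) * G b * G c = 0 := by
  have hw1 : ![a, b, c] ≠ ![0, 2, 1] := by
    intro hEq
    exact h1 ⟨congrFun hEq 0, congrFun hEq 1, congrFun hEq 2⟩
  have hw2 : ![a, b, c] ≠ ![1, 3, 0] := by
    intro hEq
    exact h2 ⟨congrFun hEq 0, congrFun hEq 1, congrFun hEq 2⟩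
  have := rel0 (k := k)
    ⟨rfl, Or.inr (Or.inr (Or.inr (Or.inr (Or.inr (Or.inr (Or.inr
      ⟨![a, b, c], hw1, hw2, rfl⟩))))))⟩
  simpa [map_mul, G] using this

/-- monomial basis of `B` -/
noncomputable def mon (i : Fin 16) : B k :=
  match i with
  | ⟨0,_⟩ => 1
  | ⟨1,_⟩ => G 0
  | ⟨2,_⟩ => G 1
  | ⟨3,_⟩ => G 2
  | ⟨4,_⟩ => G 3
  | ⟨5,_⟩ => G 0 * G 1
  | ⟨6,_⟩ => G 1 * G 0
  | ⟨7,_⟩ => G 0 * G 2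
  | ⟨8,_⟩ => G 0 * G 3
  | ⟨9,_⟩ => G 1 * G 2
  | ⟨10,_⟩ => G 1 * G 3
  | ⟨11,_⟩ => G 2 * G 0
  | ⟨12,_⟩ => G 3 * G 0
  | ⟨13,_⟩ => G 2 * G 1
  | ⟨14,_⟩ => G 3 * G 1
  | ⟨15,_⟩ => G 0 * G 2 * G 1
  | ⟨_+16,h⟩ => absurd h (by omega)

noncomputable abbrev M : Submodule k (B k) := Submodule.span k (Set.range mon)

lemma hM (i : Fin 16) : (mon i : B k) ∈ M := Submodule.subset_span ⟨i, rfl⟩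

set_option maxHeartbeats 1000000 in
lemma Gmul_mem0 (i : Fin 16) : (G 0 : B k) * mon i ∈ M := by
  fin_cases i
  · show (G 0 : B k) * 1 ∈ M
    rw [mul_one]; exact hM 1
  · show (G 0 : B k) * G 0 ∈ M
    rw [relxx]; exact zero_mem _
  · show (G 0 : B k) * G 1 ∈ M
    exact hM 5
  · show (G 0 : B k) * G 2 ∈ M
    exact hM 7
  · show (G 0 : B k) * G 3 ∈ M
    exact hM 8
  · show (G 0 : B k) * (G 0 * G 1) ∈ M
    rw [← mul_assoc, word3B 0 0 1 (by decide) (by decide)]; exact zero_mem _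
  · show (G 0 : B k) * (G 1 * G 0) ∈ M
    rw [← mul_assoc, word3B 0 1 0 (by decide) (by decide)]; exact zero_mem _
  · show (G 0 : B k) * (G 0 * G 2) ∈ M
    rw [← mul_assoc, word3B 0 0 2 (by decide) (by decide)]; exact zero_mem _
  · show (G 0 : B k) * (G 0 * G 3) ∈ M
    rw [← mul_assoc, word3B 0 0 3 (by decide) (by decide)]; exact zero_mem _
  · show (G 0 : B k) * (G 1 * G 2) ∈ M
    rw [← mul_assoc, word3B 0 1 2 (by decide) (by decide)]; exact zero_mem _
  · show (G 0 : B k) * (G 1 * G 3) ∈ M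
    rw [← mul_assoc, word3B 0 1 3 (by decide) (by decide)]; exact zero_mem _
  · show (G 0 : B k) * (G 2 * G 0) ∈ M
    rw [← mul_assoc, word3B 0 2 0 (by decide) (by decide)]; exact zero_mem _
  · show (G 0 : B k) * (G 3 * G 0) ∈ M
    rw [← mul_assoc, word3B 0 3 0 (by decide) (by decide)]; exact zero_mem _
  · show (G 0 : B k) * (G 2 * G 1) ∈ M
    rw [← mul_assoc]; exact hM 15
  · show (G 0 : B k) * (G 3 * G 1) ∈ M
    rw [← mul_assoc, word3B 0 3 1 (by decide) (by decide)]; exact zero_mem _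
  · show (G 0 : B k) * (G 0 * G 2 * G 1) ∈ M
    rw [← mul_assoc, ← mul_assoc, word3B 0 0 2 (by decide) (by decide), zero_mul]
    exact zero_mem _

set_option maxHeartbeats 1000000 in
lemma Gmul_mem1 (i : Fin 16) : (G 1 : B k) * mon i ∈ M := by
  fin_cases i
  · show (G 1 : B k) * 1 ∈ M
    rw [mul_one]; exact hM 2
  · show (G 1 : B k) * G 0 ∈ M
    exact hM 6
  · show (G 1 : B k) * G 1 ∈ M
    rw [relyy]; exact zero_mem _
  · show (G 1 : B k) * G 2 ∈ M
    exact hM 9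
  · show (G 1 : B k) * G 3 ∈ M
    exact hM 10
  · show (G 1 : B k) * (G 0 * G 1) ∈ M
    rw [← mul_assoc, word3B 1 0 1 (by decide) (by decide)]; exact zero_mem _
  · show (G 1 : B k) * (G 1 * G 0) ∈ M
    rw [← mul_assoc, word3B 1 1 0 (by decide) (by decide)]; exact zero_mem _
  · show (G 1 : B k) * (G 0 * G 2) ∈ M
    rw [← mul_assoc, word3B 1 0 2 (by decide) (by decide)]; exact zero_mem _
  · show (G 1 : B k) * (G 0 * G 3) ∈ M
    rw [← mul_assoc, word3B 1 0 3 (by decide) (by decide)]; exact zero_mem _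
  · show (G 1 : B k) * (G 1 * G 2) ∈ M
    rw [← mul_assoc, word3B 1 1 2 (by decide) (by decide)]; exact zero_mem _
  · show (G 1 : B k) * (G 1 * G 3) ∈ M
    rw [← mul_assoc, word3B 1 1 3 (by decide) (by decide)]; exact zero_mem _
  · show (G 1 : B k) * (G 2 * G 0) ∈ M
    rw [← mul_assoc, word3B 1 2 0 (by decide) (by decide)]; exact zero_mem _
  · show (G 1 : B k) * (G 3 * G 0) ∈ M
    rw [← mul_assoc, ← reldiff]; exact hM 15
  · show (G 1 : B k) * (G 2 * G 1) ∈ M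
    rw [← mul_assoc, word3B 1 2 1 (by decide) (by decide)]; exact zero_mem _
  · show (G 1 : B k) * (G 3 * G 1) ∈ M
    rw [← mul_assoc, word3B 1 3 1 (by decide) (by decide)]; exact zero_mem _
  · show (G 1 : B k) * (G 0 * G 2 * G 1) ∈ M
    rw [← mul_assoc, ← mul_assoc, word3B 1 0 2 (by decide) (by decide), zero_mul]
    exact zero_mem _

set_option maxHeartbeats 1000000 in
lemma Gmul_mem2 (i : Fin 16) : (G 2 : B k) * mon i ∈ M := by
  fin_cases i
  · show (G 2 : B k) * 1 ∈ M
    rw [mul_one]; exact hM 3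
  · show (G 2 : B k) * G 0 ∈ M
    exact hM 11
  · show (G 2 : B k) * G 1 ∈ M
    exact hM 13
  · show (G 2 : B k) * G 2 ∈ M
    rw [rel22]; exact zero_mem _
  · show (G 2 : B k) * G 3 ∈ M
    rw [rel23]; exact zero_mem _
  · show (G 2 : B k) * (G 0 * G 1) ∈ M
    rw [← mul_assoc, word3B 2 0 1 (by decide) (by decide)]; exact zero_mem _
  · show (G 2 : B k) * (G 1 * G 0) ∈ M
    rw [← mul_assoc, word3B 2 1 0 (by decide) (by decide)]; exact zero_mem _
  · show (G 2 : B k) * (G 0 * G 2) ∈ M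
    rw [← mul_assoc, word3B 2 0 2 (by decide) (by decide)]; exact zero_mem _
  · show (G 2 : B k) * (G 0 * G 3) ∈ M
    rw [← mul_assoc, word3B 2 0 3 (by decide) (by decide)]; exact zero_mem _
  · show (G 2 : B k) * (G 1 * G 2) ∈ M
    rw [← mul_assoc, word3B 2 1 2 (by decide) (by decide)]; exact zero_mem _
  · show (G 2 : B k) * (G 1 * G 3) ∈ M
    rw [← mul_assoc, word3B 2 1 3 (by decide) (by decide)]; exact zero_mem _
  · show (G 2 : B k) * (G 2 * G 0) ∈ M
    rw [← mul_assoc, word3B 2 2 0 (by decide) (by decide)]; exact zero_mem _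
  · show (G 2 : B k) * (G 3 * G 0) ∈ M
    rw [← mul_assoc, word3B 2 3 0 (by decide) (by decide)]; exact zero_mem _
  · show (G 2 : B k) * (G 2 * G 1) ∈ M
    rw [← mul_assoc, word3B 2 2 1 (by decide) (by decide)]; exact zero_mem _
  · show (G 2 : B k) * (G 3 * G 1) ∈ M
    rw [← mul_assoc, word3B 2 3 1 (by decide) (by decide)]; exact zero_mem _
  · show (G 2 : B k) * (G 0 * G 2 * G 1) ∈ M
    rw [← mul_assoc, ← mul_assoc, word3B 2 0 2 (by decide) (by decide), zero_mul]
    exact zero_mem _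

set_option maxHeartbeats 1000000 in
lemma Gmul_mem3 (i : Fin 16) : (G 3 : B k) * mon i ∈ M := by
  fin_cases i
  · show (G 3 : B k) * 1 ∈ M
    rw [mul_one]; exact hM 4
  · show (G 3 : B k) * G 0 ∈ M
    exact hM 12
  · show (G 3 : B k) * G 1 ∈ M
    exact hM 14
  · show (G 3 : B k) * G 2 ∈ M
    rw [rel32]; exact zero_mem _
  · show (G 3 : B k) * G 3 ∈ M
    rw [rel33]; exact zero_mem _
  · show (G 3 : B k) * (G 0 * G 1) ∈ M
    rw [← mul_assoc, word3B 3 0 1 (by decide) (by decide)]; exact zero_mem _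
  · show (G 3 : B k) * (G 1 * G 0) ∈ M
    rw [← mul_assoc, word3B 3 1 0 (by decide) (by decide)]; exact zero_mem _
  · show (G 3 : B k) * (G 0 * G 2) ∈ M
    rw [← mul_assoc, word3B 3 0 2 (by decide) (by decide)]; exact zero_mem _
  · show (G 3 : B k) * (G 0 * G 3) ∈ M
    rw [← mul_assoc, word3B 3 0 3 (by decide) (by decide)]; exact zero_mem _
  · show (G 3 : B k) * (G 1 * G 2) ∈ M
    rw [← mul_assoc, word3B 3 1 2 (by decide) (by decide)]; exact zero_mem _
  · show (G 3 : B k) * (G 1 * G 3) ∈ M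
    rw [← mul_assoc, word3B 3 1 3 (by decide) (by decide)]; exact zero_mem _
  · show (G 3 : B k) * (G 2 * G 0) ∈ M
    rw [← mul_assoc, word3B 3 2 0 (by decide) (by decide)]; exact zero_mem _
  · show (G 3 : B k) * (G 3 * G 0) ∈ M
    rw [← mul_assoc, word3B 3 3 0 (by decide) (by decide)]; exact zero_mem _
  · show (G 3 : B k) * (G 2 * G 1) ∈ M
    rw [← mul_assoc, word3B 3 2 1 (by decide) (by decide)]; exact zero_mem _
  · show (G 3 : B k) * (G 3 * G 1) ∈ M
    rw [← mul_assoc, word3B 3 3 1 (by decide) (by decide)]; exact zero_mem _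
  · show (G 3 : B k) * (G 0 * G 2 * G 1) ∈ M
    rw [← mul_assoc, ← mul_assoc, word3B 3 0 2 (by decide) (by decide), zero_mul]
    exact zero_mem _

lemma Gmul_mem (j : Fin 4) (i : Fin 16) : (G j : B k) * mon i ∈ M := by
  fin_cases j
  · exact Gmul_mem0 i
  · exact Gmul_mem1 i
  · exact Gmul_mem2 i
  · exact Gmul_mem3 i

lemma span_top : (M : Submodule k (B k)) = ⊤ := by
  have key : ∀ f : FreeAlgebra k (Fin 4), ∀ m ∈ M,
      RingQuot.mkAlgHom k (Brel k) f * m ∈ M := by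
    intro f
    induction f using FreeAlgebra.induction with
    | grade0 r =>
      intro m hm
      rw [AlgHom.commutes, ← Algebra.smul_def]
      exact Submodule.smul_mem _ _ hm
    | grade1 x =>
      intro m hm
      refine Submodule.span_induction (p := fun y _ => (G x : B k) * y ∈ M)
        ?_ ?_ ?_ ?_ hm
      · rintro _ ⟨i, rfl⟩; exact Gmul_mem x i
      · show (G x : B k) * 0 ∈ M
        rw [mul_zero]; exact zero_mem _
      · intro y z _ _ hy hz
        show (G x : B k) * (y + z) ∈ M
        rw [mul_add]; exact add_mem hy hz
      · intro c y _ hy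
        show (G x : B k) * (c • y) ∈ M
        rw [mul_smul_comm]; exact Submodule.smul_mem _ _ hy
    | mul a b ha hb =>
      intro m hm
      rw [map_mul, mul_assoc]
      exact ha _ (hb _ hm)
    | add a b ha hb =>
      intro m hm
      rw [map_add, add_mul]
      exact add_mem (ha _ hm) (hb _ hm)
  rw [eq_top_iff]
  intro b _
  obtain ⟨f, rfl⟩ := RingQuot.mkAlgHom_surjective k (Brel k) b
  simpa using key f 1 (hM 0)

/-! ### The algebra map `B → E`. -/

noncomputable def phi : FreeAlgebra k (Fin 4) →ₐ[k] E k := FreeAlgebra.lift k gb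

lemma phi_rel : ∀ ⦃x y : FreeAlgebra k (Fin 4)⦄, Brel k x y → (phi : FreeAlgebra k (Fin 4) →ₐ[k] E k) x = phi y := by
  rintro x y ⟨rfl, h⟩
  rw [map_zero]
  rcases h with h | h | h | h | h | h | h | ⟨w, hw1, hw2, h⟩ <;> subst h <;>
    simp only [map_mul, map_sub, phi, FreeAlgebra.lift_ι_apply]
  · show (gb 0 : E k) * gb 0 = 0
    show (eb 1 : E k) * eb 1 = 0
    exact e1_1
  · show (eb 2 : E k) * eb 2 = 0
    exact e2_2
  · show (eb 3 : E k) * eb 3 = 0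
    exact e3_3
  · show (eb 3 : E k) * eb 4 = 0
    exact e3_4
  · show (eb 4 : E k) * eb 3 = 0
    exact e4_3
  · show (eb 4 : E k) * eb 4 = 0
    exact e4_4
  · show (eb 1 : E k) * eb 3 * eb 2 - eb 2 * eb 4 * eb 1 = 0
    rw [e1_3, e7_2, e2_4, e10_1, sub_self]
  · refine gb_word_zero _ _ _ ?_ ?_
    · rintro ⟨h0, h1, h2⟩
      exact hw1 (by funext i; fin_cases i <;> simp [h0, h1, h2])
    · rintro ⟨h0, h1, h2⟩
      exact hw2 (by funext i; fin_cases i <;> simp [h0, h1, h2])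

noncomputable def phibar : B k →ₐ[k] E k :=
  RingQuot.liftAlgHom k ⟨phi, phi_rel⟩

lemma phibar_G (j : Fin 4) : (phibar : B k →ₐ[k] E k) (G j) = gb j := by
  rw [G, phibar, RingQuot.liftAlgHom_mkAlgHom_apply]
  exact FreeAlgebra.lift_ι_apply _ _

lemma phibar_mon (i : Fin 16) : (phibar : B k →ₐ[k] E k) (mon i) = eb i := by
  fin_cases i
  · show phibar (1 : B k) = eb 0
    rw [map_one, one_eq]
  · show phibar (G 0 : B k) = eb 1
    rw [phibar_G]; rfl
  · show phibar (G 1 : B k) = eb 2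
    rw [phibar_G]; rfl
  · show phibar (G 2 : B k) = eb 3
    rw [phibar_G]; rfl
  · show phibar (G 3 : B k) = eb 4
    rw [phibar_G]; rfl
  · show phibar ((G 0 : B k) * G 1) = eb 5
    rw [map_mul, phibar_G, phibar_G]; exact e1_2
  · show phibar ((G 1 : B k) * G 0) = eb 6
    rw [map_mul, phibar_G, phibar_G]; exact e2_1
  · show phibar ((G 0 : B k) * G 2) = eb 7
    rw [map_mul, phibar_G, phibar_G]; exact e1_3
  · show phibar ((G 0 : B k) * G 3) = eb 8
    rw [map_mul, phibar_G, phibar_G]; exact e1_4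
  · show phibar ((G 1 : B k) * G 2) = eb 9
    rw [map_mul, phibar_G, phibar_G]; exact e2_3
  · show phibar ((G 1 : B k) * G 3) = eb 10
    rw [map_mul, phibar_G, phibar_G]; exact e2_4
  · show phibar ((G 2 : B k) * G 0) = eb 11
    rw [map_mul, phibar_G, phibar_G]; exact e3_1
  · show phibar ((G 3 : B k) * G 0) = eb 12
    rw [map_mul, phibar_G, phibar_G]; exact e4_1
  · show phibar ((G 2 : B k) * G 1) = eb 13
    rw [map_mul, phibar_G, phibar_G]; exact e3_2
  · show phibar ((G 3 : B k) * G 1) = eb 14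
    rw [map_mul, phibar_G, phibar_G]; exact e4_2
  · show phibar ((G 0 : B k) * G 2 * G 1) = eb 15
    rw [map_mul, map_mul, phibar_G, phibar_G, phibar_G]
    show (eb 1 : E k) * eb 3 * eb 2 = eb 15
    rw [e1_3, e7_2]

variable (k) in
noncomputable def psi0 : E k →ₗ[k] B k where
  toFun a := ∑ i, a i • mon i
  map_add' a b := by
    simp only [add_apply, add_smul]
    rw [Finset.sum_add_distrib]
  map_smul' c a := by
    simp only [smul_apply, RingHom.id_apply, Finset.smul_sum, smul_smul]

lemma phibar_psi0 (a : E k) : (phibar : B k →ₐ[k] E k) (psi0 k a) = a := by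
  have step1 : (phibar : B k →ₐ[k] E k) (psi0 k a) = ∑ i, a i • eb i := by
    show phibar (∑ i, a i • mon i) = _
    rw [map_sum]
    exact Finset.sum_congr rfl fun i _ => by rw [map_smul, phibar_mon]
  rw [step1]
  funext j
  show (∑ i, (a i • eb i : Fin 16 → k)) j = a j
  rw [Finset.sum_apply]
  show ∑ i, (a i • (eb i : E k)) j = a j
  have : ∀ i : Fin 16, (a i • (eb i : E k)) j = if j = i then a j else 0 := by
    intro i
    rw [smul_apply, eb]
    split_ifs with h
    · subst h; rw [mul_one]
    · rw [mul_zero]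
  simp only [this]
  simp

lemma psi0_surj : Function.Surjective (psi0 k : E k →ₗ[k] B k) := by
  intro b
  have hb : b ∈ M := span_top (k := k) ▸ Submodule.mem_top
  obtain ⟨c, hc⟩ := (Submodule.mem_span_range_iff_exists_fun k).mp hb
  exact ⟨c, hc⟩

lemma phibar_bij : Function.Bijective (phibar : B k →ₐ[k] E k) := by
  constructor
  · intro b1 b2 h
    obtain ⟨c1, rfl⟩ := psi0_surj b1
    obtain ⟨c2, rfl⟩ := psi0_surj b2
    rw [phibar_psi0, phibar_psi0] at h
    rw [h]
  · intro e
    exact ⟨psi0 k e, phibar_psi0 e⟩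

variable (k) in
noncomputable def F : B k ≃ₗ[k] E k :=
  LinearEquiv.ofBijective (phibar.toLinearMap : B k →ₗ[k] E k) phibar_bij

lemma F_apply (b : B k) : F k b = phibar b := rfl

lemma F_mul (a b : B k) : F k (a * b) = F k a * F k b := by
  simp only [F_apply]; exact map_mul _ _ _

lemma Fsymm_mul (a b : E k) :
    (F k).symm (a * b) = (F k).symm a * (F k).symm b := by
  apply (F k).injective
  rw [F_mul, LinearEquiv.apply_symm_apply, LinearEquiv.apply_symm_apply,
    LinearEquiv.apply_symm_apply]

lemma finrankB : Module.finrank k (B k) = 16 := by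
  rw [LinearEquiv.finrank_eq ((F k).trans (LinearEquiv.refl k (Fin 16 → k) : E k ≃ₗ[k] (Fin 16 → k)))]
  rw [Module.finrank_fintype_fun_eq_card]
  simp

/-! ### The homotope structure on `E`. -/

def D (l : k) : E k := fun i =>
  match i with
  | ⟨3,_⟩ => l
  | ⟨4,_⟩ => 1
  | _ => 0

lemma D_eq (l : k) : D l = l • eb 3 + eb 4 := by
  funext i; fin_cases i <;>
    simp (config := { decide := true }) [D, eb, add_apply, smul_apply] <;> rfl

lemma F_Delta (l : k) : F k (BDelta k l) = D l := by
  rw [F_apply, BDelta, phibar, RingQuot.liftAlgHom_mkAlgHom_apply, map_add,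
    map_smul, phi, FreeAlgebra.lift_ι_apply, FreeAlgebra.lift_ι_apply, D_eq]
  rfl

lemma Fsymm_Delta (l : k) : (F k).symm (D l) = BDelta k l := by
  rw [← F_Delta, LinearEquiv.symm_apply_apply]

def tripleDfun (l : k) (s r : E k) : E k := fun i =>
  match i with
  | ⟨0,_⟩ => 0
  | ⟨1,_⟩ => 0
  | ⟨2,_⟩ => 0
  | ⟨3,_⟩ => l * (s 0 * r 0)
  | ⟨4,_⟩ => s 0 * r 0
  | ⟨5,_⟩ => 0
  | ⟨6,_⟩ => 0
  | ⟨7,_⟩ => l * (s 1 * r 0)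
  | ⟨8,_⟩ => s 1 * r 0
  | ⟨9,_⟩ => l * (s 2 * r 0)
  | ⟨10,_⟩ => s 2 * r 0
  | ⟨11,_⟩ => l * (s 0 * r 1)
  | ⟨12,_⟩ => s 0 * r 1
  | ⟨13,_⟩ => l * (s 0 * r 2)
  | ⟨14,_⟩ => s 0 * r 2
  | ⟨15,_⟩ => l * (s 1 * r 2) + s 2 * r 1
  | ⟨_+16,h⟩ => absurd h (by omega)

lemma D_apply (l : k) (i : Fin 16) : D l i = if i = 3 then l else if i = 4 then 1 else 0 := by
  fin_cases i <;> rfl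

lemma tripleD (l : k) (s r : E k) : s * D l * r = tripleDfun l s r := by
  funext i; fin_cases i <;> (show emul (emul s (D l)) r _ = _) <;>
    simp only [emul, D_apply, tripleDfun, Fin.reduceEq, if_true, if_false, ite_true, ite_false] <;> ring

lemma ebDeb_xx (l : k) : (eb 1 : E k) * D l * eb 1 = 0 := by
  rw [tripleD]; funext i; fin_cases i <;> (show _ = _) <;>
    simp (config := { decide := true }) [tripleDfun, eb, zero_apply]

lemma ebDeb_yy (l : k) : (eb 2 : E k) * D l * eb 2 = 0 := by
  rw [tripleD]; funext i; fin_cases i <;> (show _ = _) <;>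
    simp (config := { decide := true }) [tripleDfun, eb, zero_apply]

lemma ebDeb_xy (l : k) : (eb 1 : E k) * D l * eb 2 = l • eb 15 := by
  rw [tripleD]; funext i; fin_cases i <;> (show _ = _) <;>
    simp (config := { decide := true }) [tripleDfun, eb, smul_apply]

lemma ebDeb_yx (l : k) : (eb 2 : E k) * D l * eb 1 = eb 15 := by
  rw [tripleD]; funext i; fin_cases i <;> (show _ = _) <;>
    simp (config := { decide := true }) [tripleDfun, eb]

/-- Forward direction, key computation, assuming `l' ≠ -1`. -/
lemma keyAux (l l' : k) (hl' : l' + 1 ≠ 0) (ψ : E k ≃ₗ[k] E k)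
    (hψ : ∀ a b : E k, ψ (a * D l * b) = ψ a * D l' * ψ b) :
    l' = l ∨ l * l' = 1 := by
  set s : E k := ψ (eb 1) with hs
  set r : E k := ψ (eb 2) with hr
  -- s * D l' * s = 0
  have h1 : tripleDfun l' s s = 0 := by
    rw [← tripleD, ← hψ, ebDeb_xx, map_zero]
  have h2 : tripleDfun l' r r = 0 := by
    rw [← tripleD, ← hψ, ebDeb_yy, map_zero]
  have hs0 : s 0 = 0 := by
    have c4 : s 0 * s 0 = 0 := congrFun h1 4
    exact mul_self_eq_zero.mp c4
  have hr0 : r 0 = 0 := by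
    have c4 : r 0 * r 0 = 0 := congrFun h2 4
    exact mul_self_eq_zero.mp c4
  have hss : s 1 * s 2 = 0 := by
    have c15 : l' * (s 1 * s 2) + s 2 * s 1 = 0 := congrFun h1 15
    have : (l' + 1) * (s 1 * s 2) = 0 := by linear_combination c15
    rcases mul_eq_zero.mp this with h | h
    · exact absurd h hl'
    · exact h
  -- main equation
  have heq : l * (l' * (r 1 * s 2) + r 2 * s 1) = l' * (s 1 * r 2) + s 2 * r 1 := by
    have e1 : ψ ((eb 1 : E k) * D l * eb 2) = tripleDfun l' s r := by
      rw [hψ, tripleD]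
    have e2 : ψ ((eb 2 : E k) * D l * eb 1) = tripleDfun l' r s := by
      rw [hψ, tripleD]
    rw [ebDeb_xy, map_smul] at e1
    rw [ebDeb_yx] at e2
    have : l • tripleDfun l' r s = tripleDfun l' s r := by
      rw [← e1, ← e2]
    have c15 := congrFun this 15
    have c15' : l * (l' * (r 1 * s 2) + r 2 * s 1) =
        l' * (s 1 * r 2) + s 2 * r 1 := c15
    exact c15'
  -- determinant condition
  have hdet : s 1 * r 2 - s 2 * r 1 ≠ 0 := by
    intro h0
    have key : ∀ β γ : k, β * s 1 + γ * r 1 = 0 → β * s 2 + γ * r 2 = 0 →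
        β = 0 ∧ γ = 0 := by
      intro β γ hb1 hb2
      set v : E k := β • eb 1 + γ • eb 2 with hvdef
      have hψv : ψ v = β • s + γ • r := by
        rw [hvdef, map_add, map_smul, map_smul]
      have hz0 : (β • s + γ • r : E k) 0 = 0 := by
        rw [add_apply, smul_apply, smul_apply, hs0, hr0]; ring
      have hz1 : (β • s + γ • r : E k) 1 = 0 := by
        rw [add_apply, smul_apply, smul_apply]; linear_combination hb1
      have hz2 : (β • s + γ • r : E k) 2 = 0 := by
        rw [add_apply, smul_apply, smul_apply]; linear_combination hb2
      have hv : ψ (v * D l * eb 0) = 0 := by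
        rw [hψ, hψv, tripleD]
        funext i
        fin_cases i <;> (show _ = _) <;>
          simp [tripleDfun, hz0, hz1, hz2, zero_apply]
      have hv0 : v * D l * eb 0 = 0 := by
        apply ψ.injective
        rw [hv, map_zero]
      rw [tripleD] at hv0
      have hv1 : (v : E k) 1 = β := by
        rw [hvdef, add_apply, smul_apply, smul_apply]
        simp (config := { decide := true }) [eb]
      have hv2 : (v : E k) 2 = γ := by
        rw [hvdef, add_apply, smul_apply, smul_apply]
        simp (config := { decide := true }) [eb]
      have he0 : (eb 0 : E k) 0 = 1 := by
        simp (config := { decide := true }) [eb]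
      constructor
      · have c8 : (v : E k) 1 * (eb 0 : E k) 0 = 0 := congrFun hv0 8
        rw [hv1, he0, mul_one] at c8
        exact c8
      · have c10 : (v : E k) 2 * (eb 0 : E k) 0 = 0 := congrFun hv0 10
        rw [hv2, he0, mul_one] at c10
        exact c10
    by_cases hs1 : s 1 = 0
    · by_cases hs2 : s 2 = 0
      · rcases key 1 0 (by rw [hs1]; ring) (by rw [hs2]; ring) with ⟨h, _⟩
        exact one_ne_zero h
      · rcases key (r 2) (-s 2) (by linear_combination h0)
          (by ring) with ⟨_, h⟩
        exact hs2 (neg_eq_zero.mp h)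
    · rcases key (r 1) (-s 1) (by ring) (by linear_combination -h0) with ⟨_, h⟩
      exact hs1 (neg_eq_zero.mp h)
  rcases mul_eq_zero.mp hss with h | h
  · -- s 1 = 0, so s 2 * r 1 ≠ 0, get l * l' = 1
    right
    have hne : s 2 * r 1 ≠ 0 := by
      intro hz
      exact hdet (by rw [h, hz]; ring)
    have : (l * l' - 1) * (s 2 * r 1) = 0 := by
      linear_combination heq + (l' * r 2 - l * r 2) * h
    rcases mul_eq_zero.mp this with h' | h'
    · linear_combination h'
    · exact absurd h' hne
  · -- s 2 = 0
    left
    have hne : s 1 * r 2 ≠ 0 := by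
      intro hz
      exact hdet (by rw [h, hz]; ring)
    have : (l' - l) * (s 1 * r 2) = 0 := by
      linear_combination -heq + (l * l' * r 1 - r 1) * h
    rcases mul_eq_zero.mp this with h' | h'
    · exact sub_eq_zero.mp h'
    · exact absurd h' hne

/-- the swap permutation x↔y, h1↔h2 -/
def pf : Fin 16 → Fin 16 := fun i =>
  match i with
  | ⟨0,_⟩ => 0
  | ⟨1,_⟩ => 2
  | ⟨2,_⟩ => 1
  | ⟨3,_⟩ => 4
  | ⟨4,_⟩ => 3
  | ⟨5,_⟩ => 6
  | ⟨6,_⟩ => 5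
  | ⟨7,_⟩ => 10
  | ⟨8,_⟩ => 9
  | ⟨9,_⟩ => 8
  | ⟨10,_⟩ => 7
  | ⟨11,_⟩ => 14
  | ⟨12,_⟩ => 13
  | ⟨13,_⟩ => 12
  | ⟨14,_⟩ => 11
  | ⟨15,_⟩ => 15
  | ⟨_+16,h⟩ => absurd h (by omega)

variable (k) in
def sigmaE : E k ≃ₗ[k] E k where
  toFun a := fun i => a (pf i)
  invFun a := fun i => a (pf i)
  map_add' _ _ := rfl
  map_smul' _ _ := rfl
  left_inv a := by
    funext i
    fin_cases i <;> rfl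
  right_inv a := by
    funext i
    fin_cases i <;> rfl

lemma key_backward (l l' : k) (h : l * l' = 1) :
    ∃ ψ : E k ≃ₗ[k] E k, ∀ a b : E k, ψ (a * D l * b) = ψ a * D l' * ψ b := by
  have hl : l ≠ 0 := by
    intro h0; rw [h0, zero_mul] at h; exact zero_ne_one h
  refine ⟨(sigmaE k).trans
    (LinearEquiv.smulOfNeZero k (E k) l hl), ?_⟩
  intro a b
  show l • (sigmaE k (a * D l * b)) = (l • sigmaE k a) * D l' * (l • sigmaE k b)
  rw [tripleD, tripleD]
  funext i
  have hsig : ∀ (v : E k) (j : Fin 16), (sigmaE k v) j = v (pf j) := fun _ _ => rfl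
  fin_cases i <;>
    simp only [tripleDfun, pf, smul_apply, hsig] <;>
    first
    | ring1
    | linear_combination (-(l * a 0 * b 0)) * h
    | linear_combination (-(l * a 2 * b 0)) * h
    | linear_combination (-(l * a 1 * b 0)) * h
    | linear_combination (-(l * a 0 * b 2)) * h
    | linear_combination (-(l * a 0 * b 1)) * h
    | linear_combination (-(l * a 2 * b 1)) * h

lemma keyE (l l' : k) :
    (∃ ψ : E k ≃ₗ[k] E k, ∀ a b : E k, ψ (a * D l * b) = ψ a * D l' * ψ b) ↔
      (l' = l ∨ l * l' = 1) := by
  constructor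
  · rintro ⟨ψ, hψ⟩
    by_cases hl' : l' + 1 = 0
    · by_cases hl : l + 1 = 0
      · left; linear_combination hl' - hl
      · have hsymm : ∀ a b : E k, ψ.symm (a * D l' * b) =
            ψ.symm a * D l * ψ.symm b := by
          intro a b
          apply ψ.injective
          rw [hψ, LinearEquiv.apply_symm_apply, LinearEquiv.apply_symm_apply,
            LinearEquiv.apply_symm_apply]
        rcases keyAux l' l hl ψ.symm hsymm with h | h
        · left; exact h.symm
        · right; rw [mul_comm]; exact h
    · exact keyAux l l' hl' ψ hψ
  · rintro (rfl | h)
    · exact ⟨LinearEquiv.refl k (E k), fun _ _ => rfl⟩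
    · exact key_backward l l' h

lemma keyB (l l' : k) :
    (∃ ψ : B k ≃ₗ[k] B k, ∀ a b : B k,
        ψ (a * BDelta k l * b) = ψ a * BDelta k l' * ψ b) ↔
      (l' = l ∨ l * l' = 1) := by
  rw [← keyE]
  constructor
  · rintro ⟨ψ, hψ⟩
    refine ⟨((F k).symm.trans ψ).trans (F k), ?_⟩
    intro a b
    show F k (ψ ((F k).symm (a * D l * b))) = F k (ψ ((F k).symm a)) * D l' * F k (ψ ((F k).symm b))
    rw [Fsymm_mul, Fsymm_mul, Fsymm_Delta, hψ, F_mul, F_mul, F_Delta]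
  · rintro ⟨ψ, hψ⟩
    refine ⟨((F k).trans ψ).trans (F k).symm, ?_⟩
    intro a b
    show (F k).symm (ψ (F k (a * BDelta k l * b))) =
      (F k).symm (ψ (F k a)) * BDelta k l' * (F k).symm (ψ (F k b))
    rw [F_mul, F_mul, F_Delta, hψ, Fsymm_mul, Fsymm_mul, Fsymm_Delta]

end BHmt

/-- `B` is a 16-dimensional unital associative algebra, and its homotopes
`B_{Δ(λ)}` and `B_{Δ(λ')}` are isomorphic if and only if `λ' = λ` or
`λλ' = 1`; in particular there are infinitely many pairwise non-isomorphic
Δ-homotopes. -/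
theorem B_homotopes_iso_iff
    {k : Type*} [Field k] [IsAlgClosed k] [CharZero k] (l l' : k) :
    Module.finrank k (RingQuot (Brel k)) = 16 ∧
    ((∃ ψ : RingQuot (Brel k) ≃ₗ[k] RingQuot (Brel k),
        ∀ a b : RingQuot (Brel k),
          ψ (a * BDelta k l * b) = ψ a * BDelta k l' * ψ b) ↔
      (l' = l ∨ l * l' = 1)) :=
  ⟨BHmt.finrankB, BHmt.keyB l l'⟩
end

section
/- For every λ ∈ k, the homotope B_{Δ(λ)} has no nonzero idempotents: if i ∈ B satisfies i Δ(λ) i = i, then i = 0. -/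
namespace BHelp

open FreeAlgebra

variable {k : Type*} [Field k]

noncomputable def π (k : Type*) [Field k] :
    FreeAlgebra k (Fin 4) →ₐ[k] RingQuot (Brel k) :=
  RingQuot.mkAlgHom k (Brel k)

lemma relz {a : FreeAlgebra k (Fin 4)} (h : Brel k a 0) : π k a = 0 := by
  have := RingQuot.mkAlgHom_rel k h
  simpa [π] using this

lemma word3 (i j m : Fin 4) (hi : i = 2 ∨ i = 3) :
    π k (ι k i * ι k j * ι k m) = 0 := by
  apply relz
  refine ⟨rfl, Or.inr <| Or.inr <| Or.inr <| Or.inr <| Or.inr <| Or.inr <| Or.inr ?_⟩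
  refine ⟨![i, j, m], ?_, ?_, by simp⟩
  · intro hc
    have h0 := congrFun hc 0
    simp at h0
    rcases hi with h | h <;> rw [h] at h0 <;> exact absurd h0 (by decide)
  · intro hc
    have h0 := congrFun hc 0
    simp at h0
    rcases hi with h | h <;> rw [h] at h0 <;> exact absurd h0 (by decide)

lemma hh (i j : Fin 4) (hi : i = 2 ∨ i = 3) (hj : j = 2 ∨ j = 3) :
    π k (ι k i * ι k j) = 0 := by
  apply relz
  refine ⟨rfl, ?_⟩
  rcases hi with rfl | rfl <;> rcases hj with rfl | rfl <;> tauto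

/-- The spanning set. -/
def Sset (k : Type*) [Field k] (l : k) : Set (RingQuot (Brel k)) :=
  insert (π k (l • ι k 2 + ι k 3))
    {z | ∃ i m : Fin 4, (i = 2 ∨ i = 3) ∧ z = π k (ι k i * ι k m)}

def T (l : k) : Submodule k (RingQuot (Brel k)) := Submodule.span k (Sset k l)

lemma delta_mem (l : k) : π k (l • ι k 2 + ι k 3) ∈ T l :=
  Submodule.subset_span (Set.mem_insert _ _)

lemma him_mem (l : k) (i m : Fin 4) (hi : i = 2 ∨ i = 3) :
    π k (ι k i * ι k m) ∈ T l :=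
  Submodule.subset_span (Set.mem_insert_iff.mpr (Or.inr ⟨i, m, hi, rfl⟩))

lemma mulg (l : k) (g : FreeAlgebra k (Fin 4))
    (hg1 : π k (l • ι k 2 + ι k 3) * π k g ∈ T l)
    (hg2 : ∀ i m : Fin 4, (i = 2 ∨ i = 3) → π k (ι k i * ι k m) * π k g ∈ T l) :
    ∀ t ∈ T l, t * π k g ∈ T l := by
  intro t ht
  induction ht using Submodule.span_induction with
  | mem x hx =>
    rcases hx with rfl | ⟨i, m, hi, rfl⟩
    · exact hg1
    · exact hg2 i m hi
  | zero => simp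
  | add x y hx hy ihx ihy => simpa [add_mul] using (T l).add_mem ihx ihy
  | smul a x hx ihx => simpa [smul_mul_assoc] using (T l).smul_mem a ihx

lemma main (l : k) (f : FreeAlgebra k (Fin 4)) :
    (π k (l • ι k 2 + ι k 3) * π k f ∈ T l) ∧
    (∀ i m : Fin 4, (i = 2 ∨ i = 3) → π k (ι k i * ι k m) * π k f ∈ T l) := by
  induction f using FreeAlgebra.induction with
  | grade0 r =>
    constructor
    · rw [(π k).commutes r, ← Algebra.commutes, ← Algebra.smul_def]
      exact (T l).smul_mem r (delta_mem l)
    · intro i m hi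
      rw [(π k).commutes r, ← Algebra.commutes, ← Algebra.smul_def]
      exact (T l).smul_mem r (him_mem l i m hi)
  | grade1 m =>
    constructor
    · have : π k (l • ι k 2 + ι k 3) * π k (ι k m)
          = l • π k (ι k 2 * ι k m) + π k (ι k 3 * ι k m) := by
        rw [← map_mul, ← map_smul, ← map_add, add_mul, smul_mul_assoc]
      rw [this]
      exact (T l).add_mem ((T l).smul_mem l (him_mem l 2 m (Or.inl rfl)))
        (him_mem l 3 m (Or.inr rfl))
    · intro i n hi
      rw [← map_mul, word3 i n m hi]
      exact (T l).zero_mem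
  | mul f g hf hg =>
    constructor
    · rw [map_mul (π k) f g, ← mul_assoc]
      exact mulg l g hg.1 hg.2 _ hf.1
    · intro i m hi
      rw [map_mul (π k) f g, ← mul_assoc]
      exact mulg l g hg.1 hg.2 _ (hf.2 i m hi)
  | add f g hf hg =>
    constructor
    · rw [map_add (π k) f g, mul_add]
      exact (T l).add_mem hf.1 hg.1
    · intro i m hi
      rw [map_add (π k) f g, mul_add]
      exact (T l).add_mem (hf.2 i m hi) (hg.2 i m hi)

lemma TmulDelta (l : k) : ∀ t ∈ T l, t * π k (l • ι k 2 + ι k 3) = 0 := by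
  have e22 : π k (ι k 2) * π k (ι k 2) = 0 := by rw [← map_mul]; exact hh 2 2 (Or.inl rfl) (Or.inl rfl)
  have e23 : π k (ι k 2) * π k (ι k 3) = 0 := by rw [← map_mul]; exact hh 2 3 (Or.inl rfl) (Or.inr rfl)
  have e32 : π k (ι k 3) * π k (ι k 2) = 0 := by rw [← map_mul]; exact hh 3 2 (Or.inr rfl) (Or.inl rfl)
  have e33 : π k (ι k 3) * π k (ι k 3) = 0 := by rw [← map_mul]; exact hh 3 3 (Or.inr rfl) (Or.inr rfl)
  intro t ht
  induction ht using Submodule.span_induction with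
  | mem x hx =>
    rcases hx with rfl | ⟨i, m, hi, rfl⟩
    · rw [map_add, map_smul]
      simp [add_mul, mul_add, smul_mul_assoc, mul_smul_comm, e22, e23, e32, e33]
    · have w2 := word3 (k := k) i m 2 hi
      have w3 := word3 (k := k) i m 3 hi
      rw [map_add, map_smul, mul_add, mul_smul_comm,
        ← map_mul (π k) (ι k i * ι k m) (ι k 2), ← map_mul (π k) (ι k i * ι k m) (ι k 3), w2, w3]
      simp
  | zero => simp
  | add x y hx hy ihx ihy => rw [add_mul, ihx, ihy, add_zero]
  | smul a x hx ihx => rw [smul_mul_assoc, ihx, smul_zero]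

lemma DbD (l : k) (b : RingQuot (Brel k)) :
    BDelta k l * b * BDelta k l = 0 := by
  obtain ⟨f, rfl⟩ := RingQuot.mkAlgHom_surjective k (Brel k) b
  have h1 := (main l f).1
  have h2 := TmulDelta l _ h1
  show π k (l • ι k 2 + ι k 3) * π k f * π k (l • ι k 2 + ι k 3) = 0
  exact h2

end BHelp

/-- For every `λ ∈ k`, the homotope `B_{Δ(λ)}` has no nonzero idempotents:
`i Δ(λ) i = i` implies `i = 0`. -/
theorem B_homotope_no_idempotents
    {k : Type*} [Field k] [IsAlgClosed k] [CharZero k] (l : k) :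
    ∀ i : RingQuot (Brel k), i * BDelta k l * i = i → i = 0 := by
  intro i h
  have key := BHelp.DbD l i
  calc i = i * BDelta k l * i := h.symm
    _ = (i * BDelta k l * i) * BDelta k l * i := by rw [h]; exact h.symm
    _ = i * (BDelta k l * i * BDelta k l) * i := by simp only [mul_assoc]
    _ = 0 := by rw [key, mul_zero, zero_mul]
end
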